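/- Fix τ ∈ (0, 1]. Suppose 0 < γ₁ < γ₂ < ∞ and λ₁, λ₂ > 0 satisfy the fixed-point equations λⱼ² · ∫ 1/(s + λⱼ)² dMP(γⱼ)(s) = τ for j = 1, 2. Then ∫ s/(s + λ₁)² dMP(γ₁)(s) < ∫ s/(s + λ₂)² dMP(γ₂)(s). -/

import Mathlib

open MeasureTheory

/-- The Marchenko–Pastur measure with aspect ratio `γ`: a point mass of weight
`max 0 (1 - 1/γ)` at `0` plus the absolutely continuous part with density
`s ↦ √((b - s)(s - a)) / (2πγs)` on `[a, b]`, where `a = (1 - √γ)²`, `b = (1 + √γ)²`. -/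
noncomputable def MP (γ : ℝ) : Measure ℝ :=
  ENNReal.ofReal (max 0 (1 - 1 / γ)) • Measure.dirac 0 +
    volume.withDensity
      (Set.indicator (Set.Icc ((1 - Real.sqrt γ) ^ 2) ((1 + Real.sqrt γ) ^ 2))
        (fun s => ENNReal.ofReal
          (Real.sqrt (((1 + Real.sqrt γ) ^ 2 - s) * (s - (1 - Real.sqrt γ) ^ 2)) /
            (2 * Real.pi * γ * s))))

/-! The Stieltjes transform `m(λ) = ∫ 1/(s + λ) dMP(γ)` is explicit and satisfies
`γλm² + (λ + 1 - γ)m = 1`; differentiating this relation in `λ` expresses `∫ 1/(s + λ)²` and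
`∫ s/(s + λ)²` through `m`. With `x = λm / (1 - λm)` the fixed-point equation becomes
`τ((1 + x)² - γ) = x²` and the excess loss becomes `τ / x²`. Since `γ < 1 + x`, the solution lies
on the branch where `γ = (1 + x)² - x²/τ` is strictly decreasing in `x`: a larger `γ` forces a smaller
`x`, hence a larger excess loss. -/

open Set Real Filter

lemma HasDerivAt.arcsin_of_sq_add_sq {f : ℝ → ℝ} {f' w x : ℝ} (hf : HasDerivAt f f' x)
    (hw : 0 < w) (h : f x ^ 2 + w ^ 2 = 1) :
    HasDerivAt (fun y => arcsin (f y)) (f' / w) x := by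
  have hlt : f x ^ 2 < 1 := by nlinarith
  have h₁ : f x ≠ -1 := by rintro h₁; simp [h₁] at hlt
  have h₂ : f x ≠ 1 := by rintro h₂; simp [h₂] at hlt
  refine ((hasDerivAt_arcsin h₁ h₂).comp x hf).congr_deriv ?_
  rw [show 1 - f x ^ 2 = w ^ 2 by linarith, sqrt_sq hw.le]
  ring

noncomputable def sqrtKernelPrimitive (a b c s : ℝ) : ℝ :=
  √((b - s) * (s - a)) + ((a + b) / 2 + c) * arcsin ((2 * s - a - b) / (b - a)) +
    √((a + c) * (b + c)) *
      arcsin ((2 * ((a + c) * (b + c)) - (a + b + 2 * c) * (s + c)) / ((b - a) * (s + c)))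

section SqrtKernel

variable {a b c x : ℝ}

lemma hasDerivAt_sqrt_sub_mul_sub (hx : x ∈ Ioo a b) :
    HasDerivAt (fun s => √((b - s) * (s - a)))
      ((a + b - 2 * x) / (2 * √((b - x) * (x - a)))) x := by
  have hpos : 0 < (b - x) * (x - a) := mul_pos (by linarith [hx.2]) (by linarith [hx.1])
  have hpoly : HasDerivAt (fun s => (b - s) * (s - a)) (a + b - 2 * x) x :=
    (((hasDerivAt_id x).const_sub b).mul ((hasDerivAt_id x).sub_const a)).congr_deriv
      (by simp; ring)
  refine ((hasDerivAt_sqrt hpos.ne').comp x hpoly).congr_deriv ?_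
  field_simp

lemma hasDerivAt_arcsin_affine (hx : x ∈ Ioo a b) :
    HasDerivAt (fun s => arcsin ((2 * s - a - b) / (b - a))) (1 / √((b - x) * (x - a))) x := by
  have hba : 0 < b - a := by linarith [hx.1, hx.2]
  have hpos : 0 < (b - x) * (x - a) := mul_pos (by linarith [hx.2]) (by linarith [hx.1])
  have hr := sq_sqrt hpos.le
  have hlin : HasDerivAt (fun s => (2 * s - a - b) / (b - a)) (2 / (b - a)) x :=
    ((((hasDerivAt_id x).const_mul 2).sub_const a).sub_const b).div_const (b - a) |>.congr_deriv
      (by simp)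
  refine (hlin.arcsin_of_sq_add_sq (w := 2 * √((b - x) * (x - a)) / (b - a))
    (by positivity) (by field_simp; linear_combination 4 * hr)).congr_deriv ?_
  field_simp

lemma hasDerivAt_arcsin_moebius (hx : x ∈ Ioo a b) (hac : 0 < a + c) :
    HasDerivAt
      (fun s => arcsin ((2 * ((a + c) * (b + c)) - (a + b + 2 * c) * (s + c)) / ((b - a) * (s + c))))
      (-√((a + c) * (b + c)) / ((x + c) * √((b - x) * (x - a)))) x := by
  have hba : 0 < b - a := by linarith [hx.1, hx.2]
  have hxc : 0 < x + c := by linarith [hx.1]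
  have hP : 0 < (a + c) * (b + c) := mul_pos hac (by linarith)
  have hpos : 0 < (b - x) * (x - a) := mul_pos (by linarith [hx.2]) (by linarith [hx.1])
  have hr := sq_sqrt hpos.le
  have hp := sq_sqrt hP.le
  have hfrac : HasDerivAt
      (fun s => (2 * ((a + c) * (b + c)) - (a + b + 2 * c) * (s + c)) / ((b - a) * (s + c)))
      (-(2 * ((a + c) * (b + c))) / ((b - a) * (x + c) ^ 2)) x :=
    ((((hasDerivAt_id x).add_const c).const_mul (a + b + 2 * c)).const_sub
      (2 * ((a + c) * (b + c)))).div (((hasDerivAt_id x).add_const c).const_mul (b - a))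
      (by positivity) |>.congr_deriv (by simp only [id]; field_simp; ring)
  refine (hfrac.arcsin_of_sq_add_sq
    (w := 2 * √((a + c) * (b + c)) * √((b - x) * (x - a)) / ((b - a) * (x + c)))
    (by positivity) (by field_simp; linear_combination 4 * (a + c) * (b + c) * hr +
      4 * √((b - x) * (x - a)) ^ 2 * hp)).congr_deriv ?_
  field_simp
  linear_combination hp

lemma hasDerivAt_sqrtKernelPrimitive (hx : x ∈ Ioo a b) (hac : 0 ≤ a + c) :
    HasDerivAt (sqrtKernelPrimitive a b c) (√((b - x) * (x - a)) / (x + c)) x := by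
  have hxc : 0 < x + c := by linarith [hx.1]
  have hpos : 0 < (b - x) * (x - a) := mul_pos (by linarith [hx.2]) (by linarith [hx.1])
  have hr := sq_sqrt hpos.le
  have hlast : HasDerivAt (fun s => √((a + c) * (b + c)) *
      arcsin ((2 * ((a + c) * (b + c)) - (a + b + 2 * c) * (s + c)) / ((b - a) * (s + c))))
      (-((a + c) * (b + c)) / ((x + c) * √((b - x) * (x - a)))) x := by
    rcases hac.eq_or_lt with hac | hac
    · simpa [← hac] using hasDerivAt_const x (0 : ℝ)
    · refine ((hasDerivAt_arcsin_moebius hx hac).const_mul _).congr_deriv ?_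
      rw [mul_div_assoc', mul_neg, mul_self_sqrt (mul_pos hac (by linarith [hx.2])).le]
  refine (((hasDerivAt_sqrt_sub_mul_sub hx).add
    ((hasDerivAt_arcsin_affine hx).const_mul ((a + b) / 2 + c))).add hlast).congr_deriv ?_
  field_simp
  linear_combination -2 * hr

lemma continuousOn_sqrtKernelPrimitive (hab : a < b) (hac : 0 ≤ a + c) :
    ContinuousOn (sqrtKernelPrimitive a b c) (Icc a b) := by
  have hlast : ContinuousOn (fun s => √((a + c) * (b + c)) *
      arcsin ((2 * ((a + c) * (b + c)) - (a + b + 2 * c) * (s + c)) / ((b - a) * (s + c))))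
      (Icc a b) := by
    rcases hac.eq_or_lt with hac | hac
    · simpa [← hac] using continuousOn_const
    · refine continuousOn_const.mul (continuous_arcsin.comp_continuousOn
        (ContinuousOn.div (by fun_prop) (by fun_prop) fun s hs => ?_))
      exact (mul_pos (sub_pos.mpr hab) (by linarith [hs.1])).ne'
  have hfirst : Continuous fun s => √((b - s) * (s - a)) +
      ((a + b) / 2 + c) * arcsin ((2 * s - a - b) / (b - a)) := by
    fun_prop
  exact hfirst.continuousOn.add hlast

lemma integrableOn_sqrtKernel (hab : a < b) (hac : 0 ≤ a + c) :
    IntegrableOn (fun s => √((b - s) * (s - a)) / (s + c)) (Ioc a b) :=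
  intervalIntegral.integrableOn_deriv_of_nonneg (continuousOn_sqrtKernelPrimitive hab hac)
    (fun _ hx => hasDerivAt_sqrtKernelPrimitive hx hac)
    (fun _ hx => div_nonneg (sqrt_nonneg _) (by linarith [hx.1]))

lemma integral_sqrtKernel (hab : a < b) (hac : 0 ≤ a + c) :
    ∫ s in a..b, √((b - s) * (s - a)) / (s + c) =
      π * ((a + b) / 2 + c - √((a + c) * (b + c))) := by
  have hba : b - a ≠ 0 := (sub_pos.mpr hab).ne'
  rw [intervalIntegral.integral_eq_sub_of_hasDerivAt_of_le hab.le
    (continuousOn_sqrtKernelPrimitive hab hac) (fun _ hx => hasDerivAt_sqrtKernelPrimitive hx hac)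
    ((intervalIntegrable_iff_integrableOn_Ioc_of_le hab.le).mpr (integrableOn_sqrtKernel hab hac))]
  have hright :
      (2 * ((a + c) * (b + c)) - (a + b + 2 * c) * (b + c)) / ((b - a) * (b + c)) = -1 := by
    rw [div_eq_iff (mul_ne_zero hba (by linarith))]; ring
  have hleft : √((a + c) * (b + c)) *
      arcsin ((2 * ((a + c) * (b + c)) - (a + b + 2 * c) * (a + c)) / ((b - a) * (a + c))) =
      √((a + c) * (b + c)) * (π / 2) := by
    rcases hac.eq_or_lt with hac | hac
    · simp [← hac]
    · rw [div_eq_one_iff_eq (mul_ne_zero hba hac.ne') |>.mpr (by ring), arcsin_one]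
  simp only [sqrtKernelPrimitive, sub_self, zero_mul, mul_zero, sqrt_zero, hright, hleft]
  rw [show (2 * b - a - b) / (b - a) = 1 from (div_eq_one_iff_eq hba).mpr (by ring),
    show (2 * a - a - b) / (b - a) = -1 by rw [div_eq_iff hba]; ring, arcsin_one, arcsin_neg_one]
  ring

end SqrtKernel

noncomputable def mpLower (γ : ℝ) : ℝ := (1 - √γ) ^ 2

noncomputable def mpUpper (γ : ℝ) : ℝ := (1 + √γ) ^ 2

noncomputable def mpDensity (γ s : ℝ) : ℝ :=
  √((mpUpper γ - s) * (s - mpLower γ)) / (2 * π * γ * s)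

noncomputable def mpStieltjes (γ lam : ℝ) : ℝ :=
  (√((lam + 1 - γ) ^ 2 + 4 * γ * lam) - (lam + 1 - γ)) / (2 * γ * lam)

section MarchenkoPastur

variable {γ lam : ℝ}

lemma mpLower_nonneg : 0 ≤ mpLower γ := sq_nonneg _

lemma mpLower_lt_mpUpper (hγ : 0 < γ) : mpLower γ < mpUpper γ := by
  have := sqrt_pos.mpr hγ
  unfold mpLower mpUpper
  nlinarith

lemma mpLower_add_mul_mpUpper_add (hγ : 0 ≤ γ) (c : ℝ) :
    (mpLower γ + c) * (mpUpper γ + c) = (c + 1 - γ) ^ 2 + 4 * γ * c := by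
  unfold mpLower mpUpper
  linear_combination (√γ ^ 2 + γ - 2 + 2 * c) * sq_sqrt hγ

lemma MP_eq (γ : ℝ) :
    MP γ = ENNReal.ofReal (max 0 (1 - 1 / γ)) • Measure.dirac 0 +
      (volume.restrict (Icc (mpLower γ) (mpUpper γ))).withDensity
        (fun s => ENNReal.ofReal (mpDensity γ s)) := by
  rw [MP, withDensity_indicator measurableSet_Icc]
  rfl

lemma integrableOn_mpDensity (hγ : 0 < γ) :
    IntegrableOn (mpDensity γ) (Icc (mpLower γ) (mpUpper γ)) := by
  rw [integrableOn_Icc_iff_integrableOn_Ioc]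
  refine IntegrableOn.congr_fun ((integrableOn_sqrtKernel (c := 0) (mpLower_lt_mpUpper hγ)
    (by simpa using mpLower_nonneg)).const_mul (2 * π * γ)⁻¹) (fun s hs => ?_) measurableSet_Ioc
  have hs : 0 < s := mpLower_nonneg.trans_lt hs.1
  simp only [mpDensity, add_zero]
  field_simp

lemma isFiniteMeasure_MP (hγ : 0 < γ) : IsFiniteMeasure (MP γ) := by
  have := isFiniteMeasure_withDensity_ofReal (integrableOn_mpDensity hγ).2
  have := Measure.smul_finite (Measure.dirac (0 : ℝ))
    (ENNReal.ofReal_ne_top (r := max 0 (1 - 1 / γ)))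
  rw [MP_eq]
  infer_instance

lemma ae_nonneg_MP : ∀ᵐ s ∂MP γ, 0 ≤ s := by
  rw [MP_eq, ae_add_measure_iff]
  refine ⟨Measure.ae_smul_measure (by simp [ae_dirac_eq]) _, ?_⟩
  filter_upwards [(withDensity_absolutelyContinuous _ _).ae_le (ae_restrict_mem measurableSet_Icc)]
    with s hs using mpLower_nonneg.trans hs.1

lemma integrable_one_div_add_pow_MP (hγ : 0 < γ) {c : ℝ} (hc : 0 < c) (n : ℕ) :
    Integrable (fun s => 1 / (s + c) ^ n) (MP γ) := by
  have := isFiniteMeasure_MP hγ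
  refine Integrable.of_bound (Measurable.aestronglyMeasurable (by fun_prop)) (1 / c ^ n) ?_
  filter_upwards [ae_nonneg_MP] with s hs
  rw [norm_of_nonneg (by positivity)]
  gcongr
  linarith

lemma integral_MP (hγ : 0 < γ) {g : ℝ → ℝ} (hg : Integrable g (MP γ)) :
    ∫ s, g s ∂MP γ =
      max 0 (1 - 1 / γ) * g 0 + ∫ s in mpLower γ..mpUpper γ, mpDensity γ s * g s := by
  rw [MP_eq] at hg ⊢
  rw [integral_add_measure (hg.mono_measure (Measure.le_add_right le_rfl))
      (hg.mono_measure (Measure.le_add_left le_rfl)), integral_smul_measure, integral_dirac,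
    ENNReal.toReal_ofReal (le_max_left _ _), smul_eq_mul,
    integral_withDensity_eq_integral_toReal_smul (by unfold mpDensity; fun_prop)
      (ae_of_all _ fun _ => ENNReal.ofReal_lt_top),
    intervalIntegral.integral_of_le (mpLower_lt_mpUpper hγ).le, ← integral_Icc_eq_integral_Ioc]
  congr 1
  refine setIntegral_congr_fun measurableSet_Icc fun s hs => ?_
  rw [ENNReal.toReal_ofReal, smul_eq_mul]
  exact div_nonneg (sqrt_nonneg _) (by have := mpLower_nonneg.trans hs.1; positivity)

lemma mpStieltjes_quadratic (hγ : 0 < γ) (hlam : 0 < lam) :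
    γ * lam * mpStieltjes γ lam ^ 2 + (lam + 1 - γ) * mpStieltjes γ lam = 1 := by
  have hd := sq_sqrt (by positivity : 0 ≤ (lam + 1 - γ) ^ 2 + 4 * γ * lam)
  unfold mpStieltjes
  set d := √((lam + 1 - γ) ^ 2 + 4 * γ * lam)
  field_simp
  linear_combination hd

lemma mpStieltjes_pos (hγ : 0 < γ) (hlam : 0 < lam) : 0 < mpStieltjes γ lam := by
  have : |lam + 1 - γ| < √((lam + 1 - γ) ^ 2 + 4 * γ * lam) := by
    rw [← sqrt_sq_eq_abs]
    exact sqrt_lt_sqrt (sq_nonneg _) (by nlinarith)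
  have := le_abs_self (lam + 1 - γ)
  exact div_pos (by linarith) (by positivity)

lemma mul_mpStieltjes_lt_one (hγ : 0 < γ) (hlam : 0 < lam) : lam * mpStieltjes γ lam < 1 := by
  have hlt : √((lam + 1 - γ) ^ 2 + 4 * γ * lam) < lam + 1 + γ := by
    rw [show (lam + 1 - γ) ^ 2 + 4 * γ * lam = (lam + 1 + γ) ^ 2 - 4 * γ by ring]
    exact (sqrt_lt' (by positivity)).mpr (by nlinarith)
  rw [mpStieltjes, mul_div_assoc', div_lt_one (by positivity)]
  nlinarith

lemma integral_one_div_add_MP (hγ : 0 < γ) (hlam : 0 < lam) :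
    ∫ s, 1 / (s + lam) ∂MP γ = mpStieltjes γ lam := by
  have hab := mpLower_lt_mpUpper hγ
  have h0 : 0 ≤ mpLower γ + 0 := by simpa using mpLower_nonneg
  have hsplit : EqOn (fun s => mpDensity γ s * (1 / (s + lam)))
      (fun s => (2 * π * γ * lam)⁻¹ * (√((mpUpper γ - s) * (s - mpLower γ)) / (s + 0)) -
        (2 * π * γ * lam)⁻¹ * (√((mpUpper γ - s) * (s - mpLower γ)) / (s + lam)))
      (Ioc (mpLower γ) (mpUpper γ)) := fun s hs => by
    have hs : 0 < s := mpLower_nonneg.trans_lt hs.1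
    simp only [mpDensity]
    field_simp
    ring
  rw [integral_MP hγ (by simpa using integrable_one_div_add_pow_MP hγ hlam 1),
    intervalIntegral.integral_of_le hab.le, setIntegral_congr_fun measurableSet_Ioc hsplit,
    integral_sub ((integrableOn_sqrtKernel hab h0).const_mul _)
      ((integrableOn_sqrtKernel hab (by linarith)).const_mul _),
    integral_const_mul, integral_const_mul, ← intervalIntegral.integral_of_le hab.le,
    ← intervalIntegral.integral_of_le hab.le, integral_sqrtKernel hab h0,
    integral_sqrtKernel hab (by linarith), mpLower_add_mul_mpUpper_add hγ.le,
    mpLower_add_mul_mpUpper_add hγ.le, mpStieltjes]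
  simp only [add_zero, mul_zero, sqrt_sq_eq_abs, zero_add]
  -- The atom at `0` and the term `|1 - γ|` from the continuous part combine to `(γ - 1) / (2γ)`.
  rcases le_or_gt γ 1 with h | h
  · rw [max_eq_left (by rw [sub_nonpos, le_div_iff₀ hγ]; linarith), abs_of_nonneg (by linarith)]
    field_simp
    ring
  · rw [max_eq_right (by rw [sub_nonneg, div_le_one hγ]; linarith), abs_of_neg (by linarith)]
    field_simp
    ring

lemma hasDerivAt_integral_one_div_add_MP (hγ : 0 < γ) (hlam : 0 < lam) :
    HasDerivAt (fun x => ∫ s, 1 / (s + x) ∂MP γ) (-∫ s, 1 / (s + lam) ^ 2 ∂MP γ) lam := by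
  have hball : ∀ x ∈ Metric.ball lam (lam / 2), lam / 2 < x := fun x hx => by
    rw [Metric.mem_ball, Real.dist_eq] at hx
    linarith [(abs_lt.mp hx).1]
  rw [← integral_neg]
  refine (hasDerivAt_integral_of_dominated_loc_of_deriv_le (F := fun x s => 1 / (s + x))
    (F' := fun x s => -(1 / (s + x) ^ 2)) (Metric.ball_mem_nhds lam (half_pos hlam))
    (Eventually.of_forall fun x => Measurable.aestronglyMeasurable (by fun_prop))
    (by simpa using integrable_one_div_add_pow_MP hγ hlam 1)
    (Measurable.aestronglyMeasurable (by fun_prop)) ?_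
    (integrable_one_div_add_pow_MP hγ (half_pos hlam) 2) ?_).2
  · filter_upwards [ae_nonneg_MP] with s hs x hx
    have := hball x hx
    rw [norm_neg, norm_of_nonneg (by positivity)]
    gcongr
  · filter_upwards [ae_nonneg_MP] with s hs x hx
    have hsx : s + x ≠ 0 := by linarith [hball x hx]
    simpa [one_div, neg_div] using ((hasDerivAt_id x).const_add s).fun_inv hsx

lemma integral_one_div_add_sq_MP_mul (hγ : 0 < γ) (hlam : 0 < lam) :
    (∫ s, 1 / (s + lam) ^ 2 ∂MP γ) * (1 - γ * (1 - lam * mpStieltjes γ lam) ^ 2) =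
      mpStieltjes γ lam ^ 2 := by
  have hQ := mpStieltjes_quadratic hγ hlam
  set I := ∫ s, 1 / (s + lam) ^ 2 ∂MP γ
  set m := mpStieltjes γ lam
  have hm : HasDerivAt (mpStieltjes γ) (-I) lam :=
    (hasDerivAt_integral_one_div_add_MP hγ hlam).congr_of_eventuallyEq <|
      eventually_of_mem (Ioi_mem_nhds hlam) fun x hx => (integral_one_div_add_MP hγ hx).symm
  -- differentiate the quadratic relation, which holds on a neighbourhood of `lam`
  have hquad : HasDerivAt (fun x => γ * x * mpStieltjes γ x ^ 2 + (x + 1 - γ) * mpStieltjes γ x)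
      (γ * m ^ 2 + γ * lam * (2 * m * -I) + (m + (lam + 1 - γ) * -I)) lam := by
    refine ((((hasDerivAt_id lam).const_mul γ).mul (hm.fun_pow 2)).add
      ((((hasDerivAt_id lam).add_const 1).sub_const γ).mul hm)).congr_deriv ?_
    simp only [id]
    ring
  have hzero := hquad.unique <| (hasDerivAt_const lam (1 : ℝ)).congr_of_eventuallyEq <|
    eventually_of_mem (Ioi_mem_nhds hlam) fun x hx => mpStieltjes_quadratic hγ hx
  have hpos : 0 < γ * m ^ 2 + m := by have := mpStieltjes_pos hγ hlam; positivity
  refine mul_left_cancel₀ hpos.ne' ?_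
  linear_combination I * m * (γ * (1 - lam * m) - 1) * hQ - m ^ 2 * hzero

lemma integral_div_add_sq_MP (hγ : 0 < γ) (hlam : 0 < lam) :
    ∫ s, s / (s + lam) ^ 2 ∂MP γ =
      mpStieltjes γ lam - lam * ∫ s, 1 / (s + lam) ^ 2 ∂MP γ := by
  have hsplit : (fun s => s / (s + lam) ^ 2) =ᵐ[MP γ]
      fun s => 1 / (s + lam) - lam * (1 / (s + lam) ^ 2) := by
    filter_upwards [ae_nonneg_MP] with s hs
    have : s + lam ≠ 0 := by linarith
    field_simp
    ring
  rw [integral_congr_ae hsplit,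
    integral_sub (by simpa using integrable_one_div_add_pow_MP hγ hlam 1)
      ((integrable_one_div_add_pow_MP hγ hlam 2).const_mul lam), integral_const_mul,
    integral_one_div_add_MP hγ hlam]

lemma exists_MP_moment_identities (hγ : 0 < γ) (hlam : 0 < lam) :
    ∃ x, 0 < x ∧ γ < 1 + x ∧
      (lam ^ 2 * ∫ s, 1 / (s + lam) ^ 2 ∂MP γ) * ((1 + x) ^ 2 - γ) = x ^ 2 ∧
      (∫ s, s / (s + lam) ^ 2 ∂MP γ) * ((1 + x) ^ 2 - γ) = 1 := by
  have hQ := mpStieltjes_quadratic hγ hlam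
  have hm := mpStieltjes_pos hγ hlam
  have hI := integral_one_div_add_sq_MP_mul hγ hlam
  rw [integral_div_add_sq_MP hγ hlam]
  set I := ∫ s, 1 / (s + lam) ^ 2 ∂MP γ
  set m := mpStieltjes γ lam
  have hu : 0 < 1 - lam * m := sub_pos.mpr (mul_mpStieltjes_lt_one hγ hlam)
  have hγu : 0 < 1 - γ * (1 - lam * m) := by
    have : lam * (1 - lam * m) = lam * m * (1 - γ * (1 - lam * m)) := by
      linear_combination -lam * hQ
    by_contra! h
    nlinarith [mul_pos hlam hu, mul_pos hlam hm]
  have hD : (1 + lam * m / (1 - lam * m)) ^ 2 - γ =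
      (1 - γ * (1 - lam * m) ^ 2) / (1 - lam * m) ^ 2 := by
    field_simp
    ring
  refine ⟨lam * m / (1 - lam * m), by positivity, ?_, ?_, ?_⟩
  · rw [← sub_pos, show 1 + lam * m / (1 - lam * m) - γ =
      (1 - γ * (1 - lam * m)) / (1 - lam * m) by field_simp; ring]
    positivity
  · rw [hD, div_pow, mul_div_assoc']
    congr 1
    linear_combination lam ^ 2 * hI
  · rw [hD, mul_div_assoc', div_eq_one_iff_eq (by positivity)]
    linear_combination (-lam) * hI + (1 - lam * m) * hQ

end MarchenkoPastur

lemma eq_div_sq_of_mul_eq {τ γ x E : ℝ} (hx : x ≠ 0) (hτ : τ * ((1 + x) ^ 2 - γ) = x ^ 2)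
    (hE : E * ((1 + x) ^ 2 - γ) = 1) : E = τ / x ^ 2 := by
  rw [eq_div_iff (pow_ne_zero 2 hx)]
  linear_combination (-E) * hτ + τ * hE

-- `γ = (1 + x)² - x² / τ` is strictly decreasing in `x` on the region `τ (1 + x) < x`,
-- which is where `γ < 1 + x` puts it.
lemma lt_of_lt_of_fixedPoint_eq {τ γ₁ γ₂ x₁ x₂ : ℝ} (hτ : 0 < τ) (hx₁ : 0 < x₁) (hx₂ : 0 < x₂)
    (hγx₁ : γ₁ < 1 + x₁) (hγx₂ : γ₂ < 1 + x₂)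
    (h₁ : τ * ((1 + x₁) ^ 2 - γ₁) = x₁ ^ 2) (h₂ : τ * ((1 + x₂) ^ 2 - γ₂) = x₂ ^ 2)
    (hγ : γ₁ < γ₂) : x₂ < x₁ := by
  have k₁ : τ * (1 + x₁) < x₁ := by nlinarith
  have k₂ : τ * (1 + x₂) < x₂ := by nlinarith
  by_contra! h
  nlinarith [mul_nonneg (sub_nonneg.mpr h) (by linarith : 0 ≤ x₁ + x₂ - τ * (2 + x₁ + x₂))]

theorem stmt16_general (τ : ℝ) (hτ0 : 0 < τ)
    (γ₁ γ₂ lam₁ lam₂ : ℝ) (hγ1 : 0 < γ₁) (hγ12 : γ₁ < γ₂)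
    (hl1 : 0 < lam₁) (hl2 : 0 < lam₂)
    (hfp1 : lam₁ ^ 2 * ∫ s, 1 / (s + lam₁) ^ 2 ∂(MP γ₁) = τ)
    (hfp2 : lam₂ ^ 2 * ∫ s, 1 / (s + lam₂) ^ 2 ∂(MP γ₂) = τ) :
    (∫ s, s / (s + lam₁) ^ 2 ∂(MP γ₁)) < ∫ s, s / (s + lam₂) ^ 2 ∂(MP γ₂) := by
  obtain ⟨x₁, hx₁, hγx₁, hτ₁, hE₁⟩ := exists_MP_moment_identities hγ1 hl1
  obtain ⟨x₂, hx₂, hγx₂, hτ₂, hE₂⟩ := exists_MP_moment_identities (hγ1.trans hγ12) hl2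
  rw [hfp1] at hτ₁
  rw [hfp2] at hτ₂
  rw [eq_div_sq_of_mul_eq hx₁.ne' hτ₁ hE₁, eq_div_sq_of_mul_eq hx₂.ne' hτ₂ hE₂]
  have hx : x₂ < x₁ := lt_of_lt_of_fixedPoint_eq hτ0 hx₁ hx₂ hγx₁ hγx₂ hτ₁ hτ₂ hγ12
  gcongr

theorem stmt16 (τ : ℝ) (hτ0 : 0 < τ) (hτ1 : τ ≤ 1)
    (γ₁ γ₂ lam₁ lam₂ : ℝ) (hγ1 : 0 < γ₁) (hγ12 : γ₁ < γ₂)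
    (hl1 : 0 < lam₁) (hl2 : 0 < lam₂)
    (hfp1 : lam₁ ^ 2 * ∫ s, 1 / (s + lam₁) ^ 2 ∂(MP γ₁) = τ)
    (hfp2 : lam₂ ^ 2 * ∫ s, 1 / (s + lam₂) ^ 2 ∂(MP γ₂) = τ) :
    (∫ s, s / (s + lam₁) ^ 2 ∂(MP γ₁)) < ∫ s, s / (s + lam₂) ^ 2 ∂(MP γ₂) :=
  stmt16_general τ hτ0 γ₁ γ₂ lam₁ lam₂ hγ1 hγ12 hl1 hl2 hfp1 hfp2
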